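/- Let K be a field and q ∈ K with q ≠ 0 and q² ≠ 1. Define [m] := (q^m − q^{−m})/(q − q^{−1}) for m ∈ ℤ. Let ℓ, n be integers with ℓ ≥ n ≥ 1. Then Σ_{w ∈ S_n} ∏_{t=1}^{n} ( [ℓ − 2·|J_w^{<t}|] · q^{ℓ−2t+1} ) = ( ∏_{k=1}^{n} (q^{−2k} − 1)/(q^{−2} − 1) ) · ( ∏_{t=1}^{n} (1 + q^{2} + ⋯ + q^{2(ℓ−t)}) ). (This identity is the graded dimension formula for the cyclotomic nilHecke algebra H^{(0)}_{ℓ,n} of Corollary 3.10, expressed as a pure q-identity.) -/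

import Mathlib

open Finset Equiv

/-!
Recording `|J_w^{<t}| ∈ {0, …, t}` (0-based) for every `t` is a bijection from `S_n` onto
`∏_t {0, …, t}`: a permutation of `Fin (n + 1)` is a permutation of `Fin n` together with the
value of the last point. Hence the sum over `w` factorises as `∏_t ∑_{c ≤ t} [ℓ - 2c] q^{ℓ-2t-1}`.
The inner sum is `[t + 1][ℓ - t]`, by induction on `t` from `[a + 1][b - 1] = [a][b] + [b - a - 1]`,
and `[t + 1] q^{-t}`, `[ℓ - t] q^{ℓ-t-1}` are the two geometric sums on the right.
-/

section QInt

variable {K : Type*} [Field K]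

def qInt (q : K) (m : ℤ) : K := (q ^ m - q ^ (-m)) / (q - q⁻¹)

variable {q : K}

lemma sub_inv_ne_zero_of_sq_ne_one (hq : q ≠ 0) (hq2 : q ^ 2 ≠ 1) : q - q⁻¹ ≠ 0 := by
  intro h
  apply hq2
  field_simp at h
  linear_combination h

lemma qInt_inv (m : ℤ) : qInt q⁻¹ m = qInt q m := by
  simp only [qInt, inv_zpow', inv_inv, zpow_neg]
  rw [← neg_div_neg_eq, neg_sub, neg_sub]

lemma qInt_one (hq : q ≠ 0) (hq2 : q ^ 2 ≠ 1) : qInt q 1 = 1 := by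
  simp [qInt, div_self (sub_inv_ne_zero_of_sq_ne_one hq hq2)]

lemma qInt_mul_zpow_eq_geom_sum (hq : q ≠ 0) (hq2 : q ^ 2 ≠ 1) (m : ℕ) :
    qInt q m * q ^ ((m : ℤ) - 1) = ∑ j ∈ range m, (q ^ 2) ^ j := by
  have h := sub_inv_ne_zero_of_sq_ne_one hq hq2
  rw [geom_sum_eq hq2, qInt, zpow_sub_one₀ hq, zpow_neg, zpow_natCast]
  field_simp
  ring

lemma qInt_add_one_mul_qInt_sub_one (hq : q ≠ 0) (hq2 : q ^ 2 ≠ 1) (a b : ℤ) :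
    qInt q (a + 1) * qInt q (b - 1) = qInt q a * qInt q b + qInt q (b - a - 1) := by
  have h := sub_inv_ne_zero_of_sq_ne_one hq hq2
  simp only [qInt, zpow_add₀ hq, zpow_sub₀ hq, zpow_neg, zpow_one]
  field_simp
  ring

lemma sum_range_qInt_sub_two_mul (hq : q ≠ 0) (hq2 : q ^ 2 ≠ 1) (l : ℤ) (t : ℕ) :
    ∑ c ∈ range (t + 1), qInt q (l - 2 * c) = qInt q (t + 1) * qInt q (l - t) := by
  induction t with
  | zero => simp [qInt_one hq hq2]
  | succ t ih =>
    rw [sum_range_succ, ih]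
    push_cast
    rw [show l - (t + 1) = (l - t) - 1 by ring, qInt_add_one_mul_qInt_sub_one hq hq2]
    ring_nf

lemma sum_range_qInt_mul_zpow (hq : q ≠ 0) (hq2 : q ^ 2 ≠ 1) {l t : ℕ} (ht : t ≤ l) :
    ∑ c ∈ range (t + 1), qInt q (l - 2 * c) * q ^ ((l : ℤ) - 2 * t - 1)
      = (q ^ (-(2 * ((t : ℤ) + 1))) - 1) / (q ^ (-2 : ℤ) - 1)
          * ∑ j ∈ range (l - t), q ^ (2 * j) := by
  have hq2' : q⁻¹ ^ 2 ≠ 1 := by rwa [inv_pow, inv_ne_one]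
  have left : qInt q (t + 1) * q ^ (-(t : ℤ))
      = (q ^ (-(2 * ((t : ℤ) + 1))) - 1) / (q ^ (-2 : ℤ) - 1) := by
    have e1 : q ^ (-(2 * ((t : ℤ) + 1))) = (q⁻¹ ^ 2) ^ (t + 1) := by
      rw [← pow_mul, inv_pow, ← zpow_natCast, ← zpow_neg]; push_cast; ring_nf
    have e2 : q ^ (-2 : ℤ) = q⁻¹ ^ 2 := by
      rw [inv_pow, ← zpow_natCast, ← zpow_neg]; rfl
    rw [e1, e2, ← geom_sum_eq hq2', ← qInt_mul_zpow_eq_geom_sum (inv_ne_zero hq) hq2', qInt_inv,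
      inv_zpow', Nat.cast_succ, add_sub_cancel_right]
  have right : qInt q (l - t : ℕ) * q ^ (((l - t : ℕ) : ℤ) - 1)
      = ∑ j ∈ range (l - t), q ^ (2 * j) := by
    simp only [qInt_mul_zpow_eq_geom_sum hq hq2, pow_mul]
  rw [← sum_mul, sum_range_qInt_sub_two_mul hq hq2, ← left, ← right, Nat.cast_sub ht,
    show (l : ℤ) - 2 * t - 1 = -t + ((l - t) - 1) by ring, zpow_add₀ hq]
  ring

end QInt

lemma Fin.card_filter_lt_and {n : ℕ} (b : Fin (n + 1)) (P : Fin (n + 1) → Prop) [DecidablePred P] :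
    #{j | j < b ∧ P j} = #{i : Fin n | i.castSucc < b ∧ P i.castSucc} := by
  rw [card_filter, card_filter, Fin.sum_univ_castSucc]
  simp [not_lt_of_ge (Fin.le_last b)]

namespace Equiv.Perm

variable {n : ℕ}

def smallerBefore (w : Perm (Fin n)) (t : Fin n) : ℕ := #{j | j < t ∧ w j < w t}

def insertLast (σ : Perm (Fin n)) (k : Fin (n + 1)) : Perm (Fin (n + 1)) :=
  finSuccEquivLast.trans (σ.optionCongr.trans (finSuccEquiv' k).symm)

@[simp]
lemma insertLast_castSucc (σ : Perm (Fin n)) (k : Fin (n + 1)) (j : Fin n) :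
    insertLast σ k j.castSucc = k.succAbove (σ j) := by
  simp [insertLast]

@[simp]
lemma insertLast_last (σ : Perm (Fin n)) (k : Fin (n + 1)) : insertLast σ k (Fin.last n) = k := by
  simp [insertLast]

lemma insertLast_bijective :
    Function.Bijective fun p : Perm (Fin n) × Fin (n + 1) => insertLast p.1 p.2 := by
  rw [Fintype.bijective_iff_injective_and_card]
  refine ⟨fun ⟨σ₁, k₁⟩ ⟨σ₂, k₂⟩ h => ?_, by simp [Fintype.card_perm, Nat.factorial_succ, mul_comm]⟩
  obtain rfl : k₁ = k₂ := by simpa using DFunLike.congr_fun h (Fin.last n)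
  have hσ : σ₁ = σ₂ := Equiv.ext fun j => Fin.succAbove_right_injective (p := k₁) <| by
    simpa using DFunLike.congr_fun h j.castSucc
  rw [hσ]

lemma smallerBefore_insertLast_last (σ : Perm (Fin n)) (k : Fin (n + 1)) :
    smallerBefore (insertLast σ k) (Fin.last n) = k := by
  rw [smallerBefore, Fin.card_filter_lt_and]
  simp only [Fin.castSucc_lt_last, insertLast_castSucc, insertLast_last, true_and,
    Fin.succAbove_lt_iff_castSucc_lt]
  rw [card_equiv σ (t := {m : Fin n | (m : ℕ) < k}) (by simp [Fin.lt_def]),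
    Fin.card_filter_val_lt, min_eq_right k.is_le]

lemma smallerBefore_insertLast_castSucc (σ : Perm (Fin n)) (k : Fin (n + 1)) (t : Fin n) :
    smallerBefore (insertLast σ k) t.castSucc = smallerBefore σ t := by
  rw [smallerBefore, Fin.card_filter_lt_and]
  simp [smallerBefore]

theorem sum_prod_smallerBefore {R : Type*} [CommSemiring R] (f : ℕ → ℕ → R) (n : ℕ) :
    ∑ w : Perm (Fin n), ∏ t : Fin n, f t (smallerBefore w t)
      = ∏ t ∈ range n, ∑ c ∈ range (t + 1), f t c := by
  induction n with
  | zero => simp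
  | succ n ih =>
    rw [← Fintype.sum_bijective _ insertLast_bijective
      (fun p : Perm (Fin n) × Fin (n + 1) => (∏ t : Fin n, f t (smallerBefore p.1 t)) * f n p.2) _
      fun p => ?_]
    · simp only [Fintype.sum_prod_type]
      rw [← sum_mul_sum, ih, prod_range_succ, ← Fin.sum_univ_eq_sum_range (f n ·)]
    · simp [Fin.prod_univ_castSucc, smallerBefore_insertLast_last,
        smallerBefore_insertLast_castSucc]

end Equiv.Perm

theorem stmt8_general {K : Type*} [Field K] (q : K) (hq : q ≠ 0) (hq2 : q ^ 2 ≠ 1)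
    (l n : ℕ) (hl : n ≤ l) :
    ∑ w : Equiv.Perm (Fin n), ∏ t : Fin n,
        ((q ^ ((l : ℤ) - 2 * ((Finset.univ.filter (fun j => j < t ∧ w j < w t)).card : ℤ))
            - q ^ (-((l : ℤ) - 2 * ((Finset.univ.filter (fun j => j < t ∧ w j < w t)).card : ℤ))))
          / (q - q⁻¹))
        * q ^ ((l : ℤ) - 2 * ((t : ℕ) : ℤ) - 1)
      = (∏ k ∈ Finset.range n, (q ^ (-(2 * ((k : ℤ) + 1))) - 1) / (q ^ (-2 : ℤ) - 1))
        * ∏ t ∈ Finset.range n, ∑ j ∈ Finset.range (l - t), q ^ (2 * j) := by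
  refine (Perm.sum_prod_smallerBefore
    (fun t c => qInt q (l - 2 * c) * q ^ ((l : ℤ) - 2 * t - 1)) n).trans ?_
  rw [← prod_mul_distrib]
  exact prod_congr rfl fun t ht =>
    sum_range_qInt_mul_zpow hq hq2 ((mem_range.mp ht).le.trans hl)

/-- Corollary 3.10 of the paper (graded dimension of the cyclotomic nilHecke algebra
`H^{(0)}_{ℓ,n}`), as a pure `q`-identity (0-based indexing, `[m] = (q^m − q^{−m})/(q − q⁻¹)`):
`Σ_{w ∈ S_n} ∏_{t} [ℓ − 2|J_w^{<t}|]·q^{ℓ−2t−1}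
  = (∏_{k=1}^n (q^{−2k} − 1)/(q^{−2} − 1)) · (∏_{t=0}^{n-1} Σ_{j=0}^{ℓ−t−1} q^{2j})`. -/
theorem stmt8 {K : Type*} [Field K] (q : K) (hq : q ≠ 0) (hq2 : q ^ 2 ≠ 1)
    (l n : ℕ) (hn : 1 ≤ n) (hl : n ≤ l) :
    ∑ w : Equiv.Perm (Fin n), ∏ t : Fin n,
        ((q ^ ((l : ℤ) - 2 * ((Finset.univ.filter (fun j => j < t ∧ w j < w t)).card : ℤ))
            - q ^ (-((l : ℤ) - 2 * ((Finset.univ.filter (fun j => j < t ∧ w j < w t)).card : ℤ))))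
          / (q - q⁻¹))
        * q ^ ((l : ℤ) - 2 * ((t : ℕ) : ℤ) - 1)
      = (∏ k ∈ Finset.range n, (q ^ (-(2 * ((k : ℤ) + 1))) - 1) / (q ^ (-2 : ℤ) - 1))
        * ∏ t ∈ Finset.range n, ∑ j ∈ Finset.range (l - t), q ^ (2 * j) :=
  stmt8_general q hq hq2 l n hl
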